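/- For any totally real n-plane π in a Hermitian vector space with g-orthonormal basis e₁,…,eₙ, the quantity ρ_J(π) = sqrt(det_C h(eᵢ,eⱼ)) satisfies ρ_J(π) ≤ 1, with equality if and only if π is Lagrangian. -/

import Mathlib

open scoped InnerProductSpace ComplexOrder

/-!
The matrix `H = (h(eᵢ, eⱼ))` is the Gram matrix of the `eᵢ`, hence Hermitian and positive
semidefinite; since `Re h = g` and the `eᵢ` are `g`-orthonormal, its diagonal is `1`. Its
eigenvalues `λᵢ ≥ 0` therefore sum to `n`, and `x ≤ exp (x - 1)` (strict unless `x = 1`) gives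
`det H = ∏ λᵢ ≤ exp (∑ λᵢ - n) = 1`, with equality iff every `λᵢ = 1`, i.e. `H = 1`, i.e.
`ω(eᵢ, eⱼ) = -Im h(eᵢ, eⱼ)` vanishes.
-/

namespace Real

section SumEqCard

variable {ι : Type*} [Fintype ι] {x : ι → ℝ}

theorem prod_exp_sub_one_eq_one (hsum : ∑ i, x i = Fintype.card ι) :
    ∏ i, exp (x i - 1) = 1 := by
  rw [← exp_sum, Finset.sum_sub_distrib, hsum]
  simp

theorem prod_le_one_of_sum_eq_card (h0 : ∀ i, 0 ≤ x i) (hsum : ∑ i, x i = Fintype.card ι) :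
    ∏ i, x i ≤ 1 :=
  calc ∏ i, x i ≤ ∏ i, exp (x i - 1) :=
        Finset.prod_le_prod (fun i _ => h0 i) fun i _ => by linarith [add_one_le_exp (x i - 1)]
    _ = 1 := prod_exp_sub_one_eq_one hsum

theorem prod_eq_one_iff_of_sum_eq_card (h0 : ∀ i, 0 ≤ x i)
    (hsum : ∑ i, x i = Fintype.card ι) : ∏ i, x i = 1 ↔ ∀ i, x i = 1 := by
  refine ⟨fun hprod => ?_, fun h => by simp [h]⟩
  by_contra! ⟨j, hj⟩
  have hpos : ∀ i, 0 < x i := fun i =>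
    (h0 i).lt_of_ne' (Finset.prod_ne_zero_iff.mp (hprod ▸ one_ne_zero) i (Finset.mem_univ i))
  have hlt : ∏ i, x i < ∏ i, exp (x i - 1) :=
    Finset.prod_lt_prod (fun i _ => hpos i)
      (fun i _ => by linarith [add_one_le_exp (x i - 1)])
      ⟨j, Finset.mem_univ j, by linarith [add_one_lt_exp (x := x j - 1) (sub_ne_zero.mpr hj)]⟩
  rw [hprod, prod_exp_sub_one_eq_one hsum] at hlt
  exact hlt.false

end SumEqCard

end Real

namespace Matrix

variable {𝕜 n : Type*} [RCLike 𝕜] [Fintype n] [DecidableEq n] {A : Matrix n n 𝕜}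

theorem IsHermitian.re_det_eq_prod_eigenvalues (hA : A.IsHermitian) :
    RCLike.re A.det = ∏ i, hA.eigenvalues i := by
  rw [hA.det_eq_prod_eigenvalues, ← RCLike.ofReal_prod, RCLike.ofReal_re]

theorem IsHermitian.sum_eigenvalues_eq_card_of_diag_eq_one (hA : A.IsHermitian)
    (hdiag : ∀ i, A i i = 1) : ∑ i, hA.eigenvalues i = Fintype.card n := by
  have htrace : A.trace = Fintype.card n := by simp [trace, hdiag]
  rw [hA.trace_eq_sum_eigenvalues, ← RCLike.ofReal_sum] at htrace
  exact_mod_cast htrace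

theorem IsHermitian.eq_one_of_eigenvalues_eq_one (hA : A.IsHermitian)
    (h : ∀ i, hA.eigenvalues i = 1) : A = 1 := by
  rw [hA.spectral_theorem, show (RCLike.ofReal ∘ hA.eigenvalues : n → 𝕜) = fun _ => 1 from funext fun i => by simp [h i],
    diagonal_one, map_one]

theorem PosSemidef.re_det_le_one_of_diag_eq_one (hA : A.PosSemidef) (hdiag : ∀ i, A i i = 1) :
    RCLike.re A.det ≤ 1 := by
  rw [hA.isHermitian.re_det_eq_prod_eigenvalues]
  exact Real.prod_le_one_of_sum_eq_card hA.eigenvalues_nonneg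
    (hA.isHermitian.sum_eigenvalues_eq_card_of_diag_eq_one hdiag)

theorem PosSemidef.re_det_eq_one_iff_of_diag_eq_one (hA : A.PosSemidef)
    (hdiag : ∀ i, A i i = 1) : RCLike.re A.det = 1 ↔ A = 1 := by
  refine ⟨fun hdet => hA.isHermitian.eq_one_of_eigenvalues_eq_one ?_, fun h => by simp [h]⟩
  rw [hA.isHermitian.re_det_eq_prod_eigenvalues] at hdet
  exact (Real.prod_eq_one_iff_of_sum_eq_card hA.eigenvalues_nonneg
    (hA.isHermitian.sum_eigenvalues_eq_card_of_diag_eq_one hdiag)).mp hdet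

end Matrix

theorem stmt7_general {n : ℕ} {V : Type*} [NormedAddCommGroup V] [InnerProductSpace ℂ V]
    (e : Fin n → V)
    (horth : ∀ i j, (⟪e i, e j⟫_ℂ).re = if i = j then 1 else 0) :
    let ρJ : ℝ := Real.sqrt ((Matrix.of fun i j => (⟪e i, e j⟫_ℂ)).det).re
    ρJ ≤ 1 ∧ (ρJ = 1 ↔ ∀ i j, (⟪e i, e j⟫_ℂ).im = 0) := by
  intro ρJ
  have hH : (Matrix.gram ℂ e).PosSemidef := Matrix.posSemidef_gram ℂ e
  have hdiag : ∀ i, Matrix.gram ℂ e i i = 1 := fun i =>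
    Complex.ext (by simpa using horth i i) (by simpa using inner_self_im (𝕜 := ℂ) (e i))
  have hgram_eq_one : Matrix.gram ℂ e = 1 ↔ ∀ i j, (⟪e i, e j⟫_ℂ).im = 0 := by
    simp only [← Matrix.ext_iff, Matrix.gram_apply, Matrix.one_apply, Complex.ext_iff, horth,
      apply_ite Complex.re, apply_ite Complex.im, Complex.one_re, Complex.one_im, Complex.zero_re,
      Complex.zero_im, ite_self, and_iff_right_of_imp, implies_true]
  refine ⟨Real.sqrt_le_one.mpr (hH.re_det_le_one_of_diag_eq_one hdiag), ?_⟩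
  rw [← hgram_eq_one, ← hH.re_det_eq_one_iff_of_diag_eq_one hdiag]
  exact Real.sqrt_eq_one

/-- For a totally real `n`-plane in a Hermitian vector space with
`g`-orthonormal basis `e₁,…,eₙ`, the quantity `ρ_J(π) = sqrt(det_C h(eᵢ,eⱼ))`
satisfies `ρ_J(π) ≤ 1`, with equality iff the plane is Lagrangian (`ω|_π = 0`,
i.e. `Im h(eᵢ,eⱼ) = 0` for all `i,j`). -/
theorem stmt7 {n : ℕ} {V : Type*} [NormedAddCommGroup V] [InnerProductSpace ℂ V]
    [FiniteDimensional ℂ V] (hdim : Module.finrank ℂ V = n)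
    (e : Fin n → V)
    (horth : ∀ i j, (⟪e i, e j⟫_ℂ).re = if i = j then 1 else 0)
    (htr : ∀ x ∈ Submodule.span ℝ (Set.range e),
      Complex.I • x ∈ Submodule.span ℝ (Set.range e) → x = 0) :
    let ρJ : ℝ := Real.sqrt ((Matrix.of fun i j => (⟪e i, e j⟫_ℂ)).det).re
    ρJ ≤ 1 ∧ (ρJ = 1 ↔ ∀ i j, (⟪e i, e j⟫_ℂ).im = 0) :=
  stmt7_general e horth
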